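/- arXiv:2305.17818 — 2 statements merged into one kernel-verified Lean document; each statement's English description precedes it below -/
import Mathlib

section
/- For all real numbers a, b and p with 1 < p ≤ 2, there exists a constant α > 0 depending only on p such that (|a|^{p-2} a - |b|^{p-2} b)(a - b) ≥ α |a-b|^2 (|a|+|b|)^{p-2} whenever (a,b) ≠ (0,0). -/
private lemma aux_pow (p : ℝ) (hp1 : 1 < p) {x : ℝ} (hx : 0 ≤ x) :
    x ^ (p - 2) * x = x ^ (p - 1) := by
  rcases eq_or_lt_of_le hx with h | h
  · rw [← h, Real.zero_rpow (by linarith : p - 1 ≠ 0), mul_zero]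
  · rw [show p - 1 = p - 2 + 1 by ring, Real.rpow_add_one h.ne']

private lemma aux1 (p : ℝ) (hp1 : 1 < p) (hp2 : p ≤ 2) {a b : ℝ} (hb : 0 ≤ b) (hab : b < a) :
    (p - 1) * (a - b) * (a + b) ^ (p - 2) ≤ a ^ (p - 1) - b ^ (p - 1) := by
  have ha : 0 < a := hb.trans_lt hab
  have hA : (0:ℝ) < a ^ (p - 2) := Real.rpow_pos_of_pos ha _
  -- concavity / Bernoulli step : b^(p-1) ≤ a^(p-1) + (p-1)*(b-a)*a^(p-2)
  have hs : (-1:ℝ) ≤ b / a - 1 := by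
    have : 0 ≤ b / a := div_nonneg hb ha.le
    linarith
  have hB := rpow_one_add_le_one_add_mul_self hs (by linarith : (0:ℝ) ≤ p - 1)
      (by linarith : p - 1 ≤ 1)
  rw [show (1:ℝ) + (b / a - 1) = b / a by ring] at hB
  have h2 : b ^ (p - 1) = (b / a) ^ (p - 1) * a ^ (p - 1) := by
    rw [← Real.mul_rpow (div_nonneg hb ha.le) ha.le, div_mul_cancel₀ _ ha.ne']
  have h3 : a ^ (p - 1) = a ^ (p - 2) * a := by
    rw [show p - 1 = p - 2 + 1 by ring, Real.rpow_add_one ha.ne']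
  have h4 : (1 + (p - 1) * (b / a - 1)) * a ^ (p - 1) =
      a ^ (p - 1) + (p - 1) * (b - a) * a ^ (p - 2) := by
    rw [h3]; field_simp
  have h5 : b ^ (p - 1) ≤ a ^ (p - 1) + (p - 1) * (b - a) * a ^ (p - 2) := by
    rw [h2, ← h4]
    exact mul_le_mul_of_nonneg_right hB (Real.rpow_nonneg ha.le _)
  -- monotonicity step : (a+b)^(p-2) ≤ a^(p-2)
  have h6 : (a + b) ^ (p - 2) ≤ a ^ (p - 2) :=
    Real.rpow_le_rpow_of_nonpos ha (by linarith) (by linarith)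
  have h7 : (p - 1) * (a - b) * (a + b) ^ (p - 2) ≤ (p - 1) * (a - b) * a ^ (p - 2) := by
    apply mul_le_mul_of_nonneg_left h6
    nlinarith
  nlinarith

private lemma aux2 (p : ℝ) (hp1 : 1 < p) (hp2 : p ≤ 2) {a c : ℝ} (ha : 0 < a) (hc : 0 < c) :
    (a + c) ^ (p - 1) ≤ a ^ (p - 1) + c ^ (p - 1) := by
  have hac : (0:ℝ) < a + c := by linarith
  have h1 : (a + c) ^ (p - 1) = (a + c) ^ (p - 2) * a + (a + c) ^ (p - 2) * c := by
    rw [show p - 1 = p - 2 + 1 by ring, Real.rpow_add_one hac.ne']; ring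
  have h2 : (a + c) ^ (p - 2) ≤ a ^ (p - 2) :=
    Real.rpow_le_rpow_of_nonpos ha (by linarith) (by linarith)
  have h3 : (a + c) ^ (p - 2) ≤ c ^ (p - 2) :=
    Real.rpow_le_rpow_of_nonpos hc (by linarith) (by linarith)
  have ha' : a ^ (p - 2) * a = a ^ (p - 1) := aux_pow p hp1 ha.le
  have hc' : c ^ (p - 2) * c = c ^ (p - 1) := aux_pow p hp1 hc.le
  nlinarith [mul_le_mul_of_nonneg_right h2 ha.le, mul_le_mul_of_nonneg_right h3 hc.le]

/-- For `1 < p ≤ 2` there is `α = α(p) > 0` such that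
`(|a|^{p-2} a - |b|^{p-2} b)(a-b) ≥ α |a-b|² (|a|+|b|)^{p-2}` whenever `(a,b) ≠ (0,0)`. -/
theorem stmt3 (p : ℝ) (hp1 : 1 < p) (hp2 : p ≤ 2) :
    ∃ α : ℝ, 0 < α ∧ ∀ a b : ℝ, ¬(a = 0 ∧ b = 0) →
      (|a| ^ (p - 2) * a - |b| ^ (p - 2) * b) * (a - b)
        ≥ α * |a - b| ^ (2 : ℝ) * (|a| + |b|) ^ (p - 2) := by
  refine ⟨p - 1, by linarith, ?_⟩
  have hsq : ∀ x : ℝ, |x| ^ (2:ℝ) = x ^ 2 := fun x => by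
    rw [show (2:ℝ) = ((2:ℕ):ℝ) by norm_num, Real.rpow_natCast, sq_abs]
  -- the key claim for b < a
  have main : ∀ a b : ℝ, b < a →
      (|a| ^ (p - 2) * a - |b| ^ (p - 2) * b) * (a - b)
        ≥ (p - 1) * (a - b) ^ 2 * (|a| + |b|) ^ (p - 2) := by
    have main1 : ∀ a b : ℝ, 0 ≤ b → b < a →
        (a ^ (p - 1) - b ^ (p - 1)) * (a - b)
          ≥ (p - 1) * (a - b) ^ 2 * (a + b) ^ (p - 2) := by
      intro a b hb hab
      have h := aux1 p hp1 hp2 hb hab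
      nlinarith [mul_le_mul_of_nonneg_right h (by linarith : (0:ℝ) ≤ a - b)]
    intro a b hlt
    rcases le_or_gt 0 b with hb | hb
    · -- 0 ≤ b < a
      have ha : 0 < a := hb.trans_lt hlt
      rw [abs_of_pos ha, abs_of_nonneg hb, aux_pow p hp1 ha.le, aux_pow p hp1 hb]
      exact main1 a b hb hlt
    · rcases le_or_gt a 0 with ha | ha
      · -- b < a ≤ 0
        rw [abs_of_nonpos ha, abs_of_neg hb]
        have e1 : (-a) ^ (p - 2) * a = -((-a) ^ (p - 1)) := by
          rw [← aux_pow p hp1 (by linarith : (0:ℝ) ≤ -a)]; ring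
        have e2 : (-b) ^ (p - 2) * b = -((-b) ^ (p - 1)) := by
          rw [← aux_pow p hp1 (by linarith : (0:ℝ) ≤ -b)]; ring
        rw [e1, e2]
        have h := main1 (-b) (-a) (by linarith) (by linarith)
        rw [show (-b : ℝ) - -a = a - b by ring, show (-b : ℝ) + -a = -a + -b by ring] at h
        have e3 : (-(-a) ^ (p - 1) - -(-b) ^ (p - 1)) * (a - b)
            = ((-b) ^ (p - 1) - (-a) ^ (p - 1)) * (a - b) := by ring
        rw [e3]
        exact h
      · -- b < 0 < a
        rw [abs_of_pos ha, abs_of_neg hb, show a + -b = a - b by ring]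
        have hd : (0:ℝ) < a - b := by linarith
        have e2 : (-b) ^ (p - 2) * b = -((-b) ^ (p - 1)) := by
          rw [← aux_pow p hp1 (by linarith : (0:ℝ) ≤ -b)]; ring
        rw [aux_pow p hp1 ha.le, e2]
        have hsub := aux2 p hp1 hp2 ha (by linarith : (0:ℝ) < -b)
        rw [show a + -b = a - b by ring] at hsub
        have h3 : (a - b) ^ (p - 1) = (a - b) ^ (p - 2) * (a - b) := by
          rw [show p - 1 = p - 2 + 1 by ring, Real.rpow_add_one hd.ne']
        have hS : (0:ℝ) ≤ (a - b) ^ (p - 2) := Real.rpow_nonneg hd.le _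
        nlinarith [mul_le_mul_of_nonneg_right hsub hd.le, mul_nonneg hS (sq_nonneg (a - b))]
  intro a b _
  rw [hsq (a - b)]
  rcases lt_trichotomy a b with h | h | h
  · have hm := main b a h
    have e : (|a| ^ (p - 2) * a - |b| ^ (p - 2) * b) * (a - b)
        = (|b| ^ (p - 2) * b - |a| ^ (p - 2) * a) * (b - a) := by ring
    rw [e, show (a - b) ^ 2 = (b - a) ^ 2 by ring, add_comm |a| |b|]
    exact hm
  · subst h
    simp
  · exact main a b h
end

section
/- Let 0 < r < R, p ≥ 1, s ∈ (0,1), d ≥ 1. For any measurable v : ℝ^d → ℝ, ∬_{B_R × B_R} |v(x)-v(y)|^p / |x-y|^{d+sp} dy dx ≤ (3R/r)^{p(1-s)} ∬_{B_R × B_R, |x-y| ≤ r} |v(x)-v(y)|^p / |x-y|^{d+sp} dy dx, where B_R = B_R(0). -/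
open Set MeasureTheory Metric
open scoped ENNReal

open Finset in
lemma stmt13_jensen {k : ℕ} (hk : 0 < k) {p : ℝ} (hp : 1 ≤ p) (a : ℕ → ℝ) (ha : ∀ i, 0 ≤ a i) :
    (∑ i ∈ Finset.range k, a i) ^ p ≤ (k : ℝ) ^ (p - 1) * ∑ i ∈ Finset.range k, a i ^ p := by
  have hk0 : (0 : ℝ) < k := by exact_mod_cast hk
  have h := Real.rpow_arith_mean_le_arith_mean_rpow (Finset.range k)
      (fun _ => (k : ℝ)⁻¹) a (fun i _ => by positivity)
      (by simp [Finset.sum_const]; field_simp) (fun i _ => ha i) hp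
  rw [← Finset.mul_sum, ← Finset.mul_sum] at h
  have hS : 0 ≤ ∑ i ∈ Finset.range k, a i := Finset.sum_nonneg fun i _ => ha i
  have h2 : ((k : ℝ)⁻¹) ^ p * (∑ i ∈ Finset.range k, a i) ^ p
      ≤ (k : ℝ)⁻¹ * ∑ i ∈ Finset.range k, a i ^ p := by
    rw [← Real.mul_rpow (by positivity) hS]; exact h
  have h3 := mul_le_mul_of_nonneg_left h2 (le_of_lt (Real.rpow_pos_of_pos hk0 p))
  calc (∑ i ∈ Finset.range k, a i) ^ p
      = (k : ℝ) ^ p * (((k : ℝ)⁻¹) ^ p * (∑ i ∈ Finset.range k, a i) ^ p) := by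
        rw [← mul_assoc, ← Real.mul_rpow (le_of_lt hk0) (by positivity),
          mul_inv_cancel₀ hk0.ne', Real.one_rpow, one_mul]
    _ ≤ (k : ℝ) ^ p * ((k : ℝ)⁻¹ * ∑ i ∈ Finset.range k, a i ^ p) := h3
    _ = (k : ℝ) ^ (p - 1) * ∑ i ∈ Finset.range k, a i ^ p := by
        rw [← mul_assoc, Real.rpow_sub hk0, Real.rpow_one, div_eq_mul_inv]

lemma stmt13_aux {E : Type*} [NormedAddCommGroup E] [NormedSpace ℝ E] [MeasureSpace E]
    [BorelSpace E] [FiniteDimensional ℝ E]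
    [(volume : Measure E).IsAddHaarMeasure]
    (d : ℕ) (hd : 1 ≤ d) (hdim : Module.finrank ℝ E = d)
    (r R p s : ℝ) (hr : 0 < r) (hrR : r < R)
    (hp : 1 ≤ p) (hs : s ∈ Ioo (0 : ℝ) 1)
    (v : E → ℝ) (hv : Measurable v) :
    (∫⁻ q in (ball (0 : E) R) ×ˢ (ball (0 : E) R),
      ENNReal.ofReal (|v q.1 - v q.2| ^ p / ‖q.1 - q.2‖ ^ ((d : ℝ) + s * p)))
    ≤ ENNReal.ofReal ((3 * R / r) ^ (p * (1 - s))) *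
      ∫⁻ q in ((ball (0 : E) R) ×ˢ (ball (0 : E) R)) ∩ {q | ‖q.1 - q.2‖ ≤ r},
        ENNReal.ofReal (|v q.1 - v q.2| ^ p / ‖q.1 - q.2‖ ^ ((d : ℝ) + s * p)) := by
  classical
  obtain ⟨hs0, hs1⟩ := hs
  have hp0 : (0 : ℝ) < p := lt_of_lt_of_le one_pos hp
  have hR0 : (0 : ℝ) < R := hr.trans hrR
  set e : ℝ := (d : ℝ) + s * p with hedef
  have he0 : (0 : ℝ) < e := by
    have h1 : (1 : ℝ) ≤ d := by exact_mod_cast hd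
    have h2 := mul_pos hs0 hp0
    rw [hedef]; linarith
  set B : Set E := ball (0 : E) R with hBdef
  -- the subdivision parameter
  set k : ℕ := ⌈2 * R / r⌉₊ with hkdef
  have h2Rr : (0 : ℝ) < 2 * R / r := by positivity
  have hkpos : 0 < k := Nat.ceil_pos.mpr h2Rr
  have hk0 : (0 : ℝ) < k := by exact_mod_cast hkpos
  have hkR : 2 * R / r ≤ (k : ℝ) := Nat.le_ceil _
  have hrk : 2 * R ≤ r * k := by
    rw [div_le_iff₀ hr] at hkR; linarith
  have hk3 : (k : ℝ) ≤ 3 * R / r := by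
    have h1 : (k : ℝ) < 2 * R / r + 1 := Nat.ceil_lt_add_one (le_of_lt h2Rr)
    have h2 : (1 : ℝ) ≤ R / r := (one_le_div hr).2 (le_of_lt hrR)
    have h3 : 3 * R / r - 2 * R / r = R / r := by ring
    linarith
  -- measurability toolbox
  have hcontp : Continuous fun t : ℝ => t ^ p :=
    continuous_id.rpow_const fun _ => Or.inr (le_of_lt hp0)
  have hconte : Continuous fun t : ℝ => t ^ e :=
    continuous_id.rpow_const fun _ => Or.inr (le_of_lt he0)
  have hmeas : ∀ (f g : E × E → E) (N : E × E → E), Continuous f → Continuous g →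
      Continuous N →
      Measurable fun q : E × E => ENNReal.ofReal (|v (f q) - v (g q)| ^ p / ‖N q‖ ^ e) := by
    intro f g N hf hg hN
    have h1 : Measurable fun q : E × E => v (f q) := hv.comp' hf.measurable
    have h2 : Measurable fun q : E × E => v (g q) := hv.comp' hg.measurable
    have h3 : Measurable fun q : E × E => |v (f q) - v (g q)| ^ p :=
      hcontp.measurable.comp' ((h1.sub h2).abs)
    have h4 : Measurable fun q : E × E => ‖N q‖ ^ e :=
      hconte.measurable.comp' (continuous_norm.comp hN).measurable
    exact ENNReal.measurable_ofReal.comp' (h3.div h4)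
  have hS1 : MeasurableSet (B ×ˢ B) := measurableSet_ball.prod measurableSet_ball
  have hS2 : MeasurableSet ((B ×ˢ B) ∩ {q : E × E | ‖q.1 - q.2‖ ≤ r}) := by
    refine hS1.inter ?_
    exact measurableSet_le (continuous_norm.comp (continuous_fst.sub continuous_snd)).measurable
      measurable_const
  -- the Gagliardo integrand
  set G : E × E → ℝ≥0∞ :=
    fun q => ENNReal.ofReal (|v q.1 - v q.2| ^ p / ‖q.1 - q.2‖ ^ e) with hGdef
  have hGm : Measurable G :=
    hmeas Prod.fst Prod.snd (fun q => q.1 - q.2) continuous_fst continuous_snd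
      (continuous_fst.sub continuous_snd)
  -- conversion of restricted product integrals to iterated integrals
  have convS : ∀ S : Set (E × E), MeasurableSet S →
      (∫⁻ q in S, G q) = ∫⁻ x, ∫⁻ y, S.indicator G (x, y) := by
    intro S hS
    rw [← lintegral_indicator hS, Measure.volume_eq_prod, lintegral_prod]
    exact (hGm.indicator hS).aemeasurable
  -- main players
  set zc : ℕ → ℝ := fun j => (j : ℝ) / k with hzc
  set Q : ℕ → E × E → ℝ≥0∞ := fun i => (B ×ˢ B).indicator fun q =>
    ENNReal.ofReal (|v (q.1 + zc i • (q.2 - q.1)) - v (q.1 + zc (i + 1) • (q.2 - q.1))| ^ p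
      / ‖q.1 - q.2‖ ^ e) with hQ
  set Sψ : Set (E × E) := {q : E × E | q.2 ∈ B ∧ q.2 + q.1 ∈ B ∧ ‖q.1‖ ≤ r} with hSψ
  set ψ : E × E → ℝ≥0∞ := Sψ.indicator fun q =>
    ENNReal.ofReal (|v q.2 - v (q.2 + q.1)| ^ p / ‖q.1‖ ^ e) with hψ
  set Φ : E → ℝ≥0∞ := fun w => ∫⁻ u, ψ (w, u) with hΦ
  -- measurability of the players
  have hQm : ∀ i, Measurable (Q i) := by
    intro i
    have hc1 : Continuous fun q : E × E => q.1 + zc i • (q.2 - q.1) := by fun_prop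
    have hc2 : Continuous fun q : E × E => q.1 + zc (i + 1) • (q.2 - q.1) := by fun_prop
    exact (hmeas _ _ (fun q : E × E => q.1 - q.2) hc1 hc2
      (continuous_fst.sub continuous_snd)).indicator hS1
  have hSψm : MeasurableSet Sψ := by
    rw [hSψ]
    refine MeasurableSet.inter (measurable_snd measurableSet_ball) ?_
    refine MeasurableSet.inter ?_ ?_
    · exact (measurable_snd.add measurable_fst) measurableSet_ball
    · exact measurableSet_le (continuous_norm.comp continuous_fst).measurable measurable_const
  have hψm : Measurable ψ :=
    (hmeas (fun q => q.2) (fun q => q.2 + q.1) (fun q => q.1) continuous_snd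
      (continuous_snd.add continuous_fst) continuous_fst).indicator hSψm
  have hΦm : Measurable Φ := hψm.lintegral_prod_right'
  -- Step 1: rewrite the truncated integral as ∫⁻ w, Φ w
  have hRHS : (∫⁻ q in (B ×ˢ B) ∩ {q : E × E | ‖q.1 - q.2‖ ≤ r}, G q) = ∫⁻ w, Φ w := by
    rw [convS _ hS2]
    have step1 : ∀ x : E,
        (∫⁻ y, ((B ×ˢ B) ∩ {q : E × E | ‖q.1 - q.2‖ ≤ r}).indicator G (x, y))
          = ∫⁻ w, ((B ×ˢ B) ∩ {q : E × E | ‖q.1 - q.2‖ ≤ r}).indicator G (x, x + w) :=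
      fun x => (lintegral_add_left_eq_self
        (fun y => ((B ×ˢ B) ∩ {q : E × E | ‖q.1 - q.2‖ ≤ r}).indicator G (x, y)) x).symm
    simp only [step1]
    rw [lintegral_lintegral_swap]
    · apply lintegral_congr; intro w
      apply lintegral_congr; intro x
      have hxw : x - (x + w) = -w := by abel
      have hiff : (x, x + w) ∈ (B ×ˢ B) ∩ {q : E × E | ‖q.1 - q.2‖ ≤ r} ↔ (w, x) ∈ Sψ := by
        rw [hSψ]
        constructor
        · rintro ⟨⟨h1, h2⟩, h3⟩
          simp only [Set.mem_setOf_eq] at h3 ⊢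
          rw [hxw, norm_neg] at h3
          exact ⟨h1, h2, h3⟩
        · rintro ⟨h1, h2, h3⟩
          refine ⟨⟨h1, h2⟩, ?_⟩
          simp only [Set.mem_setOf_eq]
          rw [hxw, norm_neg]; exact h3
      by_cases hc : (x, x + w) ∈ (B ×ˢ B) ∩ {q : E × E | ‖q.1 - q.2‖ ≤ r}
      · rw [Set.indicator_of_mem hc, hψ, Set.indicator_of_mem (hiff.mp hc), hGdef]
        simp only []
        rw [hxw, norm_neg]
      · rw [Set.indicator_of_notMem hc, hψ,
          Set.indicator_of_notMem (fun hmem => hc (hiff.mpr hmem))]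
    · apply Measurable.aemeasurable
      have hcomp : Measurable fun q : E × E => (q.1, q.1 + q.2) :=
        measurable_fst.prodMk (measurable_fst.add measurable_snd)
      exact (hGm.indicator hS2).comp' hcomp
  -- Jensen's inequality, pointwise
  set c1 : ℝ≥0∞ := ENNReal.ofReal ((k : ℝ) ^ (p - 1)) with hc1def
  have hknn : (0 : ℝ) ≤ (k : ℝ) ^ (p - 1) := Real.rpow_nonneg (le_of_lt hk0) _
  have hJen : ∀ x y : E, (B ×ˢ B).indicator G (x, y)
      ≤ ∑ i ∈ Finset.range k, c1 * Q i (x, y) := by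
    intro x y
    by_cases hxy : (x, y) ∈ B ×ˢ B
    · rw [Set.indicator_of_mem hxy]
      have hQval : ∀ i : ℕ, Q i (x, y) = ENNReal.ofReal
          (|v (x + zc i • (y - x)) - v (x + zc (i + 1) • (y - x))| ^ p / ‖x - y‖ ^ e) :=
        fun i => Set.indicator_of_mem hxy _
      simp only [hQval, hc1def, ← ENNReal.ofReal_mul hknn]
      rw [← ENNReal.ofReal_sum_of_nonneg (fun i _ => by positivity)]
      apply ENNReal.ofReal_le_ofReal
      show |v x - v y| ^ p / ‖x - y‖ ^ e ≤ ∑ i ∈ Finset.range k, (k : ℝ) ^ (p - 1) *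
        (|v (x + zc i • (y - x)) - v (x + zc (i + 1) • (y - x))| ^ p / ‖x - y‖ ^ e)
      -- the real inequality
      have habs : |v x - v y| ≤ ∑ i ∈ Finset.range k,
          |v (x + zc i • (y - x)) - v (x + zc (i + 1) • (y - x))| := by
        have htel : ∑ i ∈ Finset.range k,
            (v (x + zc i • (y - x)) - v (x + zc (i + 1) • (y - x)))
            = v (x + zc 0 • (y - x)) - v (x + zc k • (y - x)) :=
          Finset.sum_range_sub' (fun j => v (x + zc j • (y - x))) k
        have h0 : x + zc 0 • (y - x) = x := by
          simp only [hzc]; norm_num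
        have hk' : x + zc k • (y - x) = y := by
          simp only [hzc]
          rw [div_self hk0.ne', one_smul, add_sub_cancel]
        rw [h0, hk'] at htel
        calc |v x - v y|
            = |∑ i ∈ Finset.range k,
                (v (x + zc i • (y - x)) - v (x + zc (i + 1) • (y - x)))| := by rw [htel]
          _ ≤ _ := Finset.abs_sum_le_sum_abs _ _
      have hpow : |v x - v y| ^ p ≤ (k : ℝ) ^ (p - 1) * ∑ i ∈ Finset.range k,
          |v (x + zc i • (y - x)) - v (x + zc (i + 1) • (y - x))| ^ p :=
        le_trans (Real.rpow_le_rpow (abs_nonneg _) habs (le_of_lt hp0))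
          (stmt13_jensen hkpos hp _ (fun i => abs_nonneg _))
      have hXnn : (0 : ℝ) ≤ (‖x - y‖ ^ e)⁻¹ :=
        inv_nonneg.mpr (Real.rpow_nonneg (norm_nonneg _) e)
      calc |v x - v y| ^ p / ‖x - y‖ ^ e
          = |v x - v y| ^ p * (‖x - y‖ ^ e)⁻¹ := div_eq_mul_inv _ _
        _ ≤ ((k : ℝ) ^ (p - 1) * ∑ i ∈ Finset.range k,
              |v (x + zc i • (y - x)) - v (x + zc (i + 1) • (y - x))| ^ p)
              * (‖x - y‖ ^ e)⁻¹ := mul_le_mul_of_nonneg_right hpow hXnn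
        _ = ∑ i ∈ Finset.range k, (k : ℝ) ^ (p - 1) *
              (|v (x + zc i • (y - x)) - v (x + zc (i + 1) • (y - x))| ^ p / ‖x - y‖ ^ e) := by
            rw [Finset.mul_sum, Finset.sum_mul]
            exact Finset.sum_congr rfl fun i _ => by rw [mul_assoc, div_eq_mul_inv]
    · rw [Set.indicator_of_notMem hxy]; exact zero_le
  -- from pointwise Jensen to the iterated-integral bound
  have hmono1 : (∫⁻ x, ∫⁻ y, (B ×ˢ B).indicator G (x, y))
      ≤ ∑ i ∈ Finset.range k, c1 * ∫⁻ x, ∫⁻ y, Q i (x, y) := by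
    have hc1top : c1 ≠ ⊤ := by rw [hc1def]; exact ENNReal.ofReal_ne_top
    calc (∫⁻ x, ∫⁻ y, (B ×ˢ B).indicator G (x, y))
        ≤ ∫⁻ x, ∫⁻ y, ∑ i ∈ Finset.range k, c1 * Q i (x, y) :=
          lintegral_mono fun x => lintegral_mono fun y => hJen x y
      _ = ∑ i ∈ Finset.range k, c1 * ∫⁻ x, ∫⁻ y, Q i (x, y) := by
          have inner : ∀ x : E, (∫⁻ y, ∑ i ∈ Finset.range k, c1 * Q i (x, y))
              = ∑ i ∈ Finset.range k, c1 * ∫⁻ y, Q i (x, y) := by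
            intro x
            rw [lintegral_finset_sum (f := fun i y => c1 * Q i (x, y)) _
              (fun i _ => measurable_const.mul ((hQm i).comp' measurable_prodMk_left))]
            exact Finset.sum_congr rfl fun i _ => lintegral_const_mul' _ _ hc1top
          simp only [inner]
          rw [lintegral_finset_sum (f := fun i x => c1 * ∫⁻ y, Q i (x, y)) _ (fun i _ => measurable_const.mul
            ((hQm i).lintegral_prod_right'))]
          exact Finset.sum_congr rfl fun i _ => lintegral_const_mul' _ _ hc1top
  -- the two scaling constants
  set cK : ℝ≥0∞ := ENNReal.ofReal (((k : ℝ) ^ e)⁻¹) with hcK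
  set cD : ℝ≥0∞ := ENNReal.ofReal |(((k : ℝ)⁻¹) ^ (Module.finrank ℝ E))⁻¹| with hcD
  have hcKtop : cK ≠ ⊤ := by rw [hcK]; exact ENNReal.ofReal_ne_top
  -- the core estimate for a single term of the chain
  have hterm : ∀ i ∈ Finset.range k,
      (∫⁻ x, ∫⁻ y, Q i (x, y)) ≤ cK * (cD * ∫⁻ w, Φ w) := by
    intro i hi
    have hik : i < k := Finset.mem_range.mp hi
    have hns : ∀ h : E, ‖(k : ℝ)⁻¹ • h‖ = (k : ℝ)⁻¹ * ‖h‖ := by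
      intro h
      rw [norm_smul, Real.norm_eq_abs, abs_of_pos (inv_pos.mpr hk0)]
    -- the pointwise comparison after the change of variables
    have t4 : ∀ h u : E, Q i (u + -(zc i • h), u + -(zc i • h) + h)
        ≤ cK * ψ ((k : ℝ)⁻¹ • h, u) := by
      intro h u
      by_cases hc : (u + -(zc i • h), u + -(zc i • h) + h) ∈ B ×ˢ B
      · have hA : u + -(zc i • h) ∈ B := hc.1
        have hC : u + -(zc i • h) + h ∈ B := hc.2
        have hyx : u + -(zc i • h) + h - (u + -(zc i • h)) = h := by abel
        have hz1 : u + -(zc i • h) + zc i • h = u := by abel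
        have hz2 : u + -(zc i • h) + zc (i + 1) • h = u + (k : ℝ)⁻¹ • h := by
          have hzz : zc (i + 1) = zc i + (k : ℝ)⁻¹ := by
            simp only [hzc]; push_cast; rw [add_div, one_div]
          rw [hzz, add_smul]; abel
        have hzc0 : (0 : ℝ) ≤ zc i := by simp only [hzc]; positivity
        have hzc1 : zc i ≤ 1 := by
          simp only [hzc]; rw [div_le_one hk0]; exact_mod_cast le_of_lt hik
        have hzc0' : (0 : ℝ) ≤ zc (i + 1) := by simp only [hzc]; positivity
        have hzc1' : zc (i + 1) ≤ 1 := by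
          simp only [hzc]; rw [div_le_one hk0]; exact_mod_cast hik
        have hu : u ∈ B := by
          have := (convex_ball (0 : E) R).add_smul_sub_mem hA hC ⟨hzc0, hzc1⟩
          rw [hyx, hz1] at this
          exact this
        have hu' : u + (k : ℝ)⁻¹ • h ∈ B := by
          have := (convex_ball (0 : E) R).add_smul_sub_mem hA hC ⟨hzc0', hzc1'⟩
          rw [hyx, hz2] at this
          exact this
        have hnr : ‖(k : ℝ)⁻¹ • h‖ ≤ r := by
          have hhn : ‖h‖ < 2 * R := by
            have h1 := norm_sub_le (u + -(zc i • h) + h) (u + -(zc i • h))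
            rw [hyx] at h1
            have h2 : ‖u + -(zc i • h) + h‖ < R := mem_ball_zero_iff.mp hC
            have h3 : ‖u + -(zc i • h)‖ < R := mem_ball_zero_iff.mp hA
            linarith
          rw [hns h]
          have h4 : (k : ℝ)⁻¹ * ‖h‖ ≤ (k : ℝ)⁻¹ * (2 * R) :=
            mul_le_mul_of_nonneg_left (le_of_lt hhn) (inv_nonneg.mpr (le_of_lt hk0))
          have h5 : (k : ℝ)⁻¹ * (2 * R) ≤ (k : ℝ)⁻¹ * (r * k) :=
            mul_le_mul_of_nonneg_left hrk (inv_nonneg.mpr (le_of_lt hk0))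
          have h6 : (k : ℝ)⁻¹ * (r * (k : ℝ)) = r := by field_simp
          linarith
        have hmemψ : ((k : ℝ)⁻¹ • h, u) ∈ Sψ := by
          rw [hSψ]; exact ⟨hu, hu', hnr⟩
        simp only [hQ, hψ]
        rw [Set.indicator_of_mem hc, Set.indicator_of_mem hmemψ]
        simp only []
        rw [hyx, hz1, hz2]
        have hsub : u + -(zc i • h) - (u + -(zc i • h) + h) = -h := by abel
        rw [hsub, norm_neg]
        have hkernel : |v u - v (u + (k : ℝ)⁻¹ • h)| ^ p / ‖h‖ ^ e
            = ((k : ℝ) ^ e)⁻¹ * (|v u - v (u + (k : ℝ)⁻¹ • h)| ^ p / ‖(k : ℝ)⁻¹ • h‖ ^ e) := by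
          rw [hns h, Real.mul_rpow (by positivity) (norm_nonneg _),
            Real.inv_rpow (le_of_lt hk0)]
          by_cases hX : ‖h‖ ^ e = 0
          · rw [hX]; simp
          · field_simp
        rw [hkernel, ENNReal.ofReal_mul (by positivity), hcK]
      · simp only [hQ]
        rw [Set.indicator_of_notMem hc]
        exact zero_le
    -- assemble the change of variables
    have t1 : ∀ x : E, (∫⁻ y, Q i (x, y)) = ∫⁻ h, Q i (x, x + h) :=
      fun x => (lintegral_add_left_eq_self (fun y => Q i (x, y)) x).symm
    have t2 : (∫⁻ x, ∫⁻ h, Q i (x, x + h)) = ∫⁻ h, ∫⁻ x, Q i (x, x + h) :=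
      lintegral_lintegral_swap
        (((hQm i).comp' (measurable_fst.prodMk (measurable_fst.add measurable_snd))).aemeasurable)
    have t3 : ∀ h : E, (∫⁻ x, Q i (x, x + h))
        = ∫⁻ u, Q i (u + -(zc i • h), u + -(zc i • h) + h) :=
      fun h => (lintegral_add_right_eq_self (fun x => Q i (x, x + h)) (-(zc i • h))).symm
    have t5 : ∀ h : E, (∫⁻ u, Q i (u + -(zc i • h), u + -(zc i • h) + h))
        ≤ cK * Φ ((k : ℝ)⁻¹ • h) := by
      intro h
      calc (∫⁻ u, Q i (u + -(zc i • h), u + -(zc i • h) + h))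
          ≤ ∫⁻ u, cK * ψ ((k : ℝ)⁻¹ • h, u) := lintegral_mono (t4 h)
        _ = cK * Φ ((k : ℝ)⁻¹ • h) := lintegral_const_mul' _ _ hcKtop
    have t6 : (∫⁻ h, Φ ((k : ℝ)⁻¹ • h)) = cD * ∫⁻ w, Φ w := by
      have hmapeq := Measure.map_addHaar_smul (volume : Measure E)
        (inv_ne_zero hk0.ne')
      calc (∫⁻ h, Φ ((k : ℝ)⁻¹ • h))
          = ∫⁻ w, Φ w ∂(Measure.map (fun h : E => (k : ℝ)⁻¹ • h) volume) :=
            (lintegral_map hΦm (measurable_const_smul _)).symm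
        _ = cD * ∫⁻ w, Φ w := by rw [hmapeq, lintegral_smul_measure, hcD, smul_eq_mul]
    calc (∫⁻ x, ∫⁻ y, Q i (x, y))
        = ∫⁻ x, ∫⁻ h, Q i (x, x + h) := lintegral_congr t1
      _ = ∫⁻ h, ∫⁻ x, Q i (x, x + h) := t2
      _ = ∫⁻ h, ∫⁻ u, Q i (u + -(zc i • h), u + -(zc i • h) + h) := lintegral_congr t3
      _ ≤ ∫⁻ h, cK * Φ ((k : ℝ)⁻¹ • h) := lintegral_mono t5
      _ = cK * ∫⁻ h, Φ ((k : ℝ)⁻¹ • h) := lintegral_const_mul' _ _ hcKtop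
      _ = cK * (cD * ∫⁻ w, Φ w) := by rw [t6]
  -- the constant bound
  have hconst : (k : ℝ≥0∞) * (c1 * (cK * cD)) ≤ ENNReal.ofReal ((3 * R / r) ^ (p * (1 - s))) := by
    have habs : |(((k : ℝ)⁻¹) ^ (Module.finrank ℝ E))⁻¹| = (k : ℝ) ^ (Module.finrank ℝ E) := by
      rw [inv_pow, inv_inv, abs_of_pos (pow_pos hk0 _)]
    have hknat : (k : ℝ≥0∞) = ENNReal.ofReal (k : ℝ) := (ENNReal.ofReal_natCast k).symm
    rw [hknat, hc1def, hcK, hcD, habs, hdim]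
    rw [← ENNReal.ofReal_mul (by positivity), ← ENNReal.ofReal_mul (by positivity),
      ← ENNReal.ofReal_mul (by positivity)]
    apply ENNReal.ofReal_le_ofReal
    have e1 : ((k : ℝ) ^ e)⁻¹ = (k : ℝ) ^ (-e) := (Real.rpow_neg (le_of_lt hk0) e).symm
    have e2 : (k : ℝ) ^ (d : ℕ) = (k : ℝ) ^ ((d : ℕ) : ℝ) := (Real.rpow_natCast _ d).symm
    calc (k : ℝ) * ((k : ℝ) ^ (p - 1) * (((k : ℝ) ^ e)⁻¹ * (k : ℝ) ^ (d : ℕ)))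
        = (k : ℝ) ^ (1 : ℝ) * ((k : ℝ) ^ (p - 1) * ((k : ℝ) ^ (-e) * (k : ℝ) ^ ((d : ℕ) : ℝ))) := by
          rw [e1, e2, Real.rpow_one]
      _ = (k : ℝ) ^ (1 + (p - 1 + (-e + (d : ℝ)))) := by
          rw [← Real.rpow_add hk0 (-e) ((d : ℕ) : ℝ), ← Real.rpow_add hk0 (p - 1) _,
            ← Real.rpow_add hk0 1 _]
      _ = (k : ℝ) ^ (p * (1 - s)) := by
          congr 1
          rw [hedef]; ring
      _ ≤ (3 * R / r) ^ (p * (1 - s)) :=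
          Real.rpow_le_rpow (le_of_lt hk0) hk3
            (mul_nonneg (le_of_lt hp0) (by linarith))
  -- assemble everything
  rw [hRHS, convS _ hS1]
  calc (∫⁻ x, ∫⁻ y, (B ×ˢ B).indicator G (x, y))
      ≤ ∑ i ∈ Finset.range k, c1 * ∫⁻ x, ∫⁻ y, Q i (x, y) := hmono1
    _ ≤ ∑ _i ∈ Finset.range k, c1 * (cK * (cD * ∫⁻ w, Φ w)) :=
        Finset.sum_le_sum fun i hi => mul_le_mul_right (hterm i hi) c1
    _ = (k : ℝ≥0∞) * (c1 * (cK * (cD * ∫⁻ w, Φ w))) := by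
        rw [Finset.sum_const, Finset.card_range, nsmul_eq_mul]
    _ = ((k : ℝ≥0∞) * (c1 * (cK * cD))) * ∫⁻ w, Φ w := by ring
    _ ≤ ENNReal.ofReal ((3 * R / r) ^ (p * (1 - s))) * ∫⁻ w, Φ w :=
        mul_le_mul_left hconst _

/-- Dyda–Kassmann localization estimate: for `0 < r < R`, `p ≥ 1`, `s ∈ (0,1)`, the full
Gagliardo double integral over `B_R × B_R` is controlled by the one truncated to
interaction distances `≤ r`, with constant `(3R/r)^{p(1-s)}`. -/
theorem stmt13 (d : ℕ) (hd : 1 ≤ d) (r R p s : ℝ) (hr : 0 < r) (hrR : r < R)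
    (hp : 1 ≤ p) (hs : s ∈ Ioo (0 : ℝ) 1)
    (v : EuclideanSpace ℝ (Fin d) → ℝ) (hv : Measurable v) :
    (∫⁻ q in (ball (0 : EuclideanSpace ℝ (Fin d)) R) ×ˢ
        (ball (0 : EuclideanSpace ℝ (Fin d)) R),
      ENNReal.ofReal (|v q.1 - v q.2| ^ p / ‖q.1 - q.2‖ ^ ((d : ℝ) + s * p)))
    ≤ ENNReal.ofReal ((3 * R / r) ^ (p * (1 - s))) *
      ∫⁻ q in ((ball (0 : EuclideanSpace ℝ (Fin d)) R) ×ˢ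
          (ball (0 : EuclideanSpace ℝ (Fin d)) R)) ∩ {q | ‖q.1 - q.2‖ ≤ r},
        ENNReal.ofReal (|v q.1 - v q.2| ^ p / ‖q.1 - q.2‖ ^ ((d : ℝ) + s * p)) :=
  stmt13_aux d hd finrank_euclideanSpace_fin r R p s hr hrR hp hs v hv
end
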